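/- arXiv:1204.3768 — 3 statements merged into one kernel-verified Lean document; each statement's English description precedes it below -/
import Mathlib

section
/- Let a : ℝ → ℝ be the 1-periodic function given by a(x) = 1 for x − ⌊x⌋ ∈ [0, 1/2) and a(x) = 2 for x − ⌊x⌋ ∈ [1/2, 1]. Then (∫₀¹ (a(x) + i)⁻¹ dx)⁻¹ = 18/13 + (14/13) i, and in particular this differs from ∫₀¹ a(x) dx + i = 3/2 + i. -/
/-!
On `(0, 1)` the function `a` is `1` before `1/2` and `2` after it, so `∫₀¹ g (a x) dx` is the
average `(g 1 + g 2) / 2` for every `g`. For `g y = (y + i)⁻¹` this averages the resolvents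
`(1 - i)/2` and `(2 - i)/5` to `(9 - 7i)/20`, whose inverse is `18/13 + (14/13) i`, whereas for
`g y = y` it gives `3/2`.
-/

open Complex Set

namespace intervalIntegral

variable {E : Type*} [NormedAddCommGroup E] [NormedSpace ℝ E]

theorem integral_comp_fract_zero_one (f : ℝ → E) :
    ∫ x in (0:ℝ)..1, f (Int.fract x) = ∫ x in (0:ℝ)..1, f x :=
  integral_congr_uIoo fun x hx => by
    rw [uIoo_of_le zero_le_one] at hx
    rw [Int.fract_eq_self.2 ⟨hx.1.le, hx.2⟩]

theorem integral_ite_lt [CompleteSpace E] {a t b : ℝ} (hat : a ≤ t) (htb : t ≤ b) (c₁ c₂ : E) :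
    ∫ x in a..b, (if x < t then c₁ else c₂) = (t - a) • c₁ + (b - t) • c₂ := by
  have h₁ : EqOn (fun _ => c₁) (fun x => if x < t then c₁ else c₂) (uIoo a t) := fun x hx => by
    rw [uIoo_of_le hat] at hx
    simp [hx.2]
  have h₂ : EqOn (fun _ => c₂) (fun x => if x < t then c₁ else c₂) (uIoo t b) := fun x hx => by
    rw [uIoo_of_le htb] at hx
    simp [hx.1.not_gt]
  rw [← integral_add_adjacent_intervals
      (intervalIntegrable_const.congr_uIoo h₁) (intervalIntegrable_const.congr_uIoo h₂),
    ← integral_congr_uIoo h₁, ← integral_congr_uIoo h₂, integral_const, integral_const]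

theorem integral_ite_fract_lt [CompleteSpace E] {t : ℝ} (ht₀ : 0 ≤ t) (ht₁ : t ≤ 1) (c₁ c₂ : E) :
    ∫ x in (0:ℝ)..1, (if Int.fract x < t then c₁ else c₂) = t • c₁ + (1 - t) • c₂ := by
  rw [integral_comp_fract_zero_one (fun y => if y < t then c₁ else c₂),
    integral_ite_lt ht₀ ht₁, sub_zero]

end intervalIntegral

/-- For the 1-periodic function `a` taking value `1` on `[0,1/2)` and `2` on `[1/2,1)`,
the inverse of the mean of `(a + i)⁻¹` is `18/13 + (14/13)i`, which differs from
`∫₀¹ a + i = 3/2 + i`. -/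
theorem harmonic_mean_differs
    (a : ℝ → ℝ) (ha : ∀ x : ℝ, a x = if Int.fract x < 1 / 2 then 1 else 2) :
    (∫ x in (0:ℝ)..1, ((a x : ℂ) + Complex.I)⁻¹)⁻¹ = 18 / 13 + (14 / 13) * Complex.I ∧
    (∫ x in (0:ℝ)..1, (a x : ℂ)) + Complex.I = 3 / 2 + Complex.I ∧
    (18 / 13 + (14 / 13) * Complex.I : ℂ) ≠ 3 / 2 + Complex.I := by
  have mean (g : ℝ → ℂ) : ∫ x in (0:ℝ)..1, g (a x) = (g 1 + g 2) / 2 := by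
    simp_rw [ha, apply_ite g]
    rw [intervalIntegral.integral_ite_fract_lt (by norm_num) (by norm_num), real_smul, real_smul]
    push_cast
    ring
  have resolvent_one : (1 + I)⁻¹ = (1 - I) / 2 :=
    inv_eq_of_mul_eq_one_right (by linear_combination (-1 / 2 : ℂ) * I_sq)
  have resolvent_two : (2 + I)⁻¹ = (2 - I) / 5 :=
    inv_eq_of_mul_eq_one_right (by linear_combination (-1 / 5 : ℂ) * I_sq)
  refine ⟨?_, ?_, ?_⟩
  · rw [mean fun y => ((y : ℂ) + I)⁻¹]
    push_cast
    rw [resolvent_one, resolvent_two]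
    exact inv_eq_of_mul_eq_one_right (by linear_combination (-49 / 130 : ℂ) * I_sq)
  · rw [mean fun y => (y : ℂ)]
    norm_num
  · intro h
    have := congrArg re h
    norm_num at this
end

section
/- Let H be a Hilbert space, ε > 0, 0 < r < ε/2, c > 0, and let M ∈ H^∞(B(0,ε); L(H)) satisfy Re(z⁻¹ M(z)) ≥ c for all z ∈ B(r,r) (the disc with center r and radius r). Then for every φ in the nullspace of M(0), one has ⟨(Re M'(0))φ, φ⟩ ≥ c⟨φ, φ⟩. -/
open Metric Filter Topology Set
open scoped InnerProductSpace

/-!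
For `φ ∈ ker M(0)` the scalar function `g z = ⟪φ, M z φ⟫` vanishes at `0` and has derivative
`⟪φ, M'(0) φ⟫` there. Along real `η ∈ (0, 2r)`, which lie in the disc `B(r,r)`, the hypothesis
gives `c ‖φ‖² ≤ Re (η⁻¹ g η)`, and `η⁻¹ g η → g'(0)` as `η → 0⁺`.
-/

lemma Complex.ofReal_mem_ball_of_mem_Ioo {r η : ℝ} (hη : η ∈ Ioo 0 (2 * r)) :
    (η : ℂ) ∈ ball (r : ℂ) r := by
  rw [mem_ball, dist_eq_norm, ← Complex.ofReal_sub, Complex.norm_real, Real.norm_eq_abs, abs_lt]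
  constructor <;> linarith [hη.1, hη.2]

lemma Complex.tendsto_ofReal_nhdsGT_zero : Tendsto ((↑) : ℝ → ℂ) (𝓝[>] 0) (𝓝[≠] 0) :=
  Complex.continuous_ofReal.continuousWithinAt.tendsto_nhdsWithin fun _ hη ↦ by
    simpa using (ne_of_gt hη : _ ≠ (0 : ℝ))

lemma HasDerivAt.tendsto_inv_mul_nhdsGT_zero {g : ℂ → ℂ} {g' : ℂ} (hg : HasDerivAt g g' 0)
    (hg₀ : g 0 = 0) : Tendsto (fun η : ℝ ↦ (η : ℂ)⁻¹ * g η) (𝓝[>] 0) (𝓝 g') := by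
  have hslope := hasDerivAt_iff_tendsto_slope_zero.mp hg
  simp only [zero_add, hg₀, sub_zero, smul_eq_mul] at hslope
  exact hslope.comp Complex.tendsto_ofReal_nhdsGT_zero

lemma HasDerivAt.le_re_of_le_re_inv_mul {g : ℂ → ℂ} {g' : ℂ} {a δ : ℝ} (hg : HasDerivAt g g' 0)
    (hg₀ : g 0 = 0) (hδ : 0 < δ) (hle : ∀ η ∈ Ioo 0 δ, a ≤ ((η : ℂ)⁻¹ * g η).re) : a ≤ g'.re :=
  ge_of_tendsto ((Complex.continuous_re.tendsto g').comp (hg.tendsto_inv_mul_nhdsGT_zero hg₀)) <|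
    eventually_of_mem (Ioo_mem_nhdsGT hδ) hle

lemma HasDerivAt.inner_clm_apply {H : Type*} [NormedAddCommGroup H] [InnerProductSpace ℂ H]
    {M : ℂ → H →L[ℂ] H} {M' : H →L[ℂ] H} {z : ℂ} (hM : HasDerivAt M M' z) (φ : H) :
    HasDerivAt (fun w ↦ ⟪φ, M w φ⟫_ℂ) ⟪φ, M' φ⟫_ℂ z :=
  (innerSL ℂ φ).hasFDerivAt.comp_hasDerivAt z (hM.clm_apply (hasDerivAt_const z φ)) |>.congr_deriv
    (by simp)

theorem re_deriv_pos_on_kernel_of_material_law_general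
    {H : Type*} [NormedAddCommGroup H] [InnerProductSpace ℂ H]
    (ε r c : ℝ) (hε : 0 < ε) (hr : 0 < r)
    (M : ℂ → H →L[ℂ] H)
    (hanal : AnalyticOnNhd ℂ M (ball (0 : ℂ) ε))
    (hacc : ∀ z ∈ ball (r : ℂ) r, ∀ φ : H,
      c * ‖φ‖ ^ 2 ≤ (z⁻¹ * (inner ℂ φ (M z φ) : ℂ)).re) :
    ∀ φ : H, M 0 φ = 0 → c * ‖φ‖ ^ 2 ≤ (inner ℂ φ (deriv M 0 φ) : ℂ).re := by
  intro φ hφ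
  have hM : HasDerivAt M (deriv M 0) 0 :=
    (hanal 0 (mem_ball_self hε)).differentiableAt.hasDerivAt
  exact (hM.inner_clm_apply φ).le_re_of_le_re_inv_mul (by simp [hφ]) (by positivity)
    fun η hη ↦ hacc η (Complex.ofReal_mem_ball_of_mem_Ioo hη) φ

/-- For a `(c)`-material law `M` (bounded analytic on `B(0,ε)` with
`Re (z⁻¹ M(z)) ≥ c` on the disc `B(r,r)`, `0 < r < ε/2`), one has
`⟨(Re M'(0))φ, φ⟩ ≥ c ⟨φ, φ⟩` for every `φ` in the nullspace of `M(0)`. -/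
theorem re_deriv_pos_on_kernel_of_material_law
    {H : Type*} [NormedAddCommGroup H] [InnerProductSpace ℂ H] [CompleteSpace H]
    (ε r c C : ℝ) (hε : 0 < ε) (hr : 0 < r) (hrε : r < ε / 2) (hc : 0 < c)
    (M : ℂ → H →L[ℂ] H)
    (hanal : AnalyticOnNhd ℂ M (ball (0 : ℂ) ε))
    (hbd : ∀ z ∈ ball (0 : ℂ) ε, ‖M z‖ ≤ C)
    (hacc : ∀ z ∈ ball (r : ℂ) r, ∀ φ : H,
      c * ‖φ‖ ^ 2 ≤ (z⁻¹ * (inner ℂ φ (M z φ) : ℂ)).re) :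
    ∀ φ : H, M 0 φ = 0 → c * ‖φ‖ ^ 2 ≤ (inner ℂ φ (deriv M 0 φ) : ℂ).re :=
  re_deriv_pos_on_kernel_of_material_law_general ε r c hε hr M hanal hacc
end

section
/- Let H be a Hilbert space, ε > 0, 0 < r < ε/2, c > 0, and M ∈ H^∞(B(0,ε); L(H)) with Re(z⁻¹M(z)) ≥ c for all z in the disc B(r,r). Then ⟨φ, M(0)φ⟩ ≥ 0 for all φ ∈ H; in particular M(0) is positive semidefinite (and hence selfadjoint). -/
/-!
Inversion `z ↦ z⁻¹` maps the disc `B(r, r)` onto the half-plane `Re w > 1/(2r)`, so for every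
`d` with `Re d > 0` the points `(n d)⁻¹` lie in the disc for large `n`. There
`Re (d f((n d)⁻¹)) ≥ b / n` with `f z = ⟨φ, M(z) φ⟩` and `b = c‖φ‖²`; letting `n → ∞` gives
`Re (d f(0)) ≥ 0` for all such `d`, which forces `f(0) ≥ 0`. A nonnegative quadratic form is
real, so `M(0)` is symmetric.
-/

open Metric Filter Topology
open scoped ComplexOrder

namespace Complex

theorem inv_mem_ball_of_one_lt {r : ℝ} (hr : 0 < r) {w : ℂ} (hw : 1 < 2 * r * w.re) :
    w⁻¹ ∈ ball (r : ℂ) r := by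
  have hw0 : w ≠ 0 := by rintro rfl; simp at hw; linarith
  have hsq : ‖1 - r * w‖ ^ 2 < (r * ‖w‖) ^ 2 := by
    rw [mul_pow, Complex.sq_norm, Complex.sq_norm, normSq_apply, normSq_apply]
    simp only [sub_re, sub_im, mul_re, mul_im, one_re, one_im, ofReal_re, ofReal_im]
    nlinarith
  rw [mem_ball, dist_eq_norm, show w⁻¹ - r = (1 - r * w) / w by field_simp, norm_div,
    div_lt_iff₀ (norm_pos_iff.mpr hw0)]
  exact lt_of_pow_lt_pow_left₀ 2 (by positivity) hsq

theorem re_mul_nonneg_of_le_re_inv_mul {f : ℂ → ℂ} {r b : ℝ} (hr : 0 < r)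
    (hf : ContinuousAt f 0) (hb : ∀ z ∈ ball (r : ℂ) r, b ≤ (z⁻¹ * f z).re)
    {d : ℂ} (hd : 0 < d.re) : 0 ≤ (d * f 0).re := by
  set z : ℕ → ℂ := fun n => ((n : ℂ) * d)⁻¹
  have hz : Tendsto z atTop (𝓝 0) := by
    simpa [z, mul_inv] using (tendsto_inv_atTop_nhds_zero_nat (𝕜 := ℂ)).const_mul d⁻¹
  have hlim : Tendsto (fun n => (d * f (z n)).re) atTop (𝓝 (d * f 0).re) :=
    (continuous_re.tendsto _).comp ((hf.tendsto.comp hz).const_mul d)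
  have hbound : ∀ᶠ n : ℕ in atTop, b / n ≤ (d * f (z n)).re := by
    filter_upwards [tendsto_natCast_atTop_atTop.eventually_gt_atTop (1 / (2 * r * d.re))]
      with n hn
    have hn0 : (0 : ℝ) < n := lt_trans (by positivity) hn
    have hmem : z n ∈ ball (r : ℂ) r := by
      refine inv_mem_ball_of_one_lt hr ?_
      rw [div_lt_iff₀ (by positivity)] at hn
      simpa [mul_comm, mul_left_comm, mul_assoc] using hn
    have hzn := hb _ hmem
    rw [inv_inv, mul_assoc, ← ofReal_natCast, re_ofReal_mul] at hzn
    rwa [div_le_iff₀ hn0, mul_comm]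
  exact le_of_tendsto_of_tendsto (tendsto_const_div_atTop_nhds_zero_nat b) hlim hbound

theorem nonneg_of_forall_re_mul_nonneg {a : ℂ} (h : ∀ d : ℂ, 0 < d.re → 0 ≤ (d * a).re) :
    0 ≤ a := by
  refine nonneg_iff.mpr ⟨by simpa using h 1 one_pos, ?_⟩
  by_contra him
  set t : ℝ := (a.re + 1) / a.im
  have ht : t * a.im = a.re + 1 := div_mul_cancel₀ _ (Ne.symm him)
  have hre : ((1 + t * I) * a).re = a.re - t * a.im := by simp [mul_re]
  have := h (1 + t * I) (by simp)
  linarith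

theorem nonneg_of_le_re_inv_mul {f : ℂ → ℂ} {r b : ℝ} (hr : 0 < r) (hf : ContinuousAt f 0)
    (hb : ∀ z ∈ ball (r : ℂ) r, b ≤ (z⁻¹ * f z).re) : 0 ≤ f 0 :=
  nonneg_of_forall_re_mul_nonneg fun _ hd => re_mul_nonneg_of_le_re_inv_mul hr hf hb hd

end Complex

theorem ContinuousLinearMap.isPositive_of_forall_inner_nonneg {E : Type*} [NormedAddCommGroup E]
    [InnerProductSpace ℂ E] {T : E →L[ℂ] E} (h : ∀ x, 0 ≤ inner ℂ x (T x)) : T.IsPositive := by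
  have h' (x : E) : 0 ≤ inner ℂ (T x) x := by
    rw [← inner_conj_symm]
    exact star_nonneg_iff.mpr (h x)
  refine (isPositive_iff T).mpr ⟨?_, h'⟩
  exact (LinearMap.isSymmetric_iff_inner_map_self_real _).mpr fun x =>
    (IsSelfAdjoint.of_nonneg (h' x)).star_eq

theorem zeroth_coefficient_nonneg_of_material_law_general
    {H : Type*} [NormedAddCommGroup H] [InnerProductSpace ℂ H] [CompleteSpace H]
    (ε r c : ℝ) (hε : 0 < ε) (hr : 0 < r)
    (M : ℂ → H →L[ℂ] H)
    (hanal : AnalyticOnNhd ℂ M (ball (0 : ℂ) ε))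
    (hacc : ∀ z ∈ ball (r : ℂ) r, ∀ φ : H,
      c * ‖φ‖ ^ 2 ≤ (z⁻¹ * (inner ℂ φ (M z φ) : ℂ)).re) :
    (∀ φ : H, 0 ≤ (inner ℂ φ (M 0 φ) : ℂ)) ∧ IsSelfAdjoint (M 0) := by
  have hM : ContinuousAt M 0 := (hanal 0 (mem_ball_self hε)).continuousAt
  have hnonneg (φ : H) : 0 ≤ inner ℂ φ (M 0 φ) :=
    Complex.nonneg_of_le_re_inv_mul hr (continuousAt_const.inner (hM.clm_apply continuousAt_const))
      fun z hz => hacc z hz φ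
  exact ⟨hnonneg, (ContinuousLinearMap.isPositive_of_forall_inner_nonneg hnonneg).isSelfAdjoint⟩

/-- For a `(c)`-material law `M` (bounded analytic on `B(0,ε)` with
`Re (z⁻¹ M(z)) ≥ c` on the disc `B(r,r)`, `0 < r < ε/2`), the operator `M(0)` is
positive semidefinite: `⟨φ, M(0)φ⟩ ≥ 0` for all `φ`; in particular `M(0)` is selfadjoint. -/
theorem zeroth_coefficient_nonneg_of_material_law
    {H : Type*} [NormedAddCommGroup H] [InnerProductSpace ℂ H] [CompleteSpace H]
    (ε r c C : ℝ) (hε : 0 < ε) (hr : 0 < r) (hrε : r < ε / 2) (hc : 0 < c)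
    (M : ℂ → H →L[ℂ] H)
    (hanal : AnalyticOnNhd ℂ M (ball (0 : ℂ) ε))
    (hbd : ∀ z ∈ ball (0 : ℂ) ε, ‖M z‖ ≤ C)
    (hacc : ∀ z ∈ ball (r : ℂ) r, ∀ φ : H,
      c * ‖φ‖ ^ 2 ≤ (z⁻¹ * (inner ℂ φ (M z φ) : ℂ)).re) :
    (∀ φ : H, 0 ≤ (inner ℂ φ (M 0 φ) : ℂ)) ∧ IsSelfAdjoint (M 0) :=
  zeroth_coefficient_nonneg_of_material_law_general ε r c hε hr M hanal hacc
end
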